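/- Let λ ∈ ℝ, R > 0 with 3R² > λ, and let a : [0,∞) → ℝ be any function. Suppose r₁, r₂ : [0,∞) → ℝ are differentiable, satisfy rᵢ'(t) = λ rᵢ(t) − rᵢ(t)³ + a(t) and rᵢ(t) ≥ R for all t ≥ 0 (i = 1, 2), and r₂(0) ≤ r₁(0). Then for all t ≥ 0, 0 ≤ r₁(t) − r₂(t) ≤ (r₁(0) − r₂(0))·e^{(λ − 3R²)t}; in particular r₁(t) − r₂(t) → 0 as t → ∞. -/

import Mathlib

/-!
The difference `u = r₁ - r₂` solves the linear equation `u' = c(t) u` with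
`c = λ - (r₁² + r₁ r₂ + r₂²) ≤ λ - 3R²`, by `x³ - y³ = (x - y)(x² + xy + y²)`.
A solution of a linear equation that vanishes once vanishes from then on (Grönwall), so `u`
cannot change sign; once `u ≥ 0` is known, `c u ≤ (λ - 3R²) u` and Grönwall again gives the
exponential bound.
-/

open Real Filter Set

section LinearODE

variable {u c : ℝ → ℝ}

theorem nonneg_of_hasDerivAt_mul_self (hu : ∀ t, 0 ≤ t → HasDerivAt u (c t * u t) t)
    (hc : ContinuousOn c (Ici 0)) (h0 : 0 ≤ u 0) {t : ℝ} (ht : 0 ≤ t) : 0 ≤ u t := by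
  by_contra! hneg
  have hu_cont : ContinuousOn u (Icc 0 t) :=
    fun x hx => (hu x hx.1).continuousAt.continuousWithinAt
  obtain ⟨s, hs, hus⟩ : (0 : ℝ) ∈ u '' Icc 0 t :=
    intermediate_value_Icc' ht hu_cont ⟨hneg.le, h0⟩
  obtain ⟨M, hM⟩ := isCompact_Icc.exists_bound_of_continuousOn (hc.mono Icc_subset_Ici_self)
  have hzero := eq_zero_of_abs_deriv_le_mul_abs_self_of_eq_zero_right (K := M)
    (hu_cont.mono (Icc_subset_Icc_left hs.1))
    (fun x hx => (hu x (hs.1.trans hx.1)).hasDerivWithinAt) hus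
    (fun x hx => by
      rw [norm_mul]
      exact mul_le_mul_of_nonneg_right (hM x ⟨hs.1.trans hx.1, hx.2.le⟩) (norm_nonneg _))
    t ⟨hs.2, le_rfl⟩
  exact hneg.ne hzero

theorem le_mul_exp_of_hasDerivAt_mul_self {K : ℝ} (hu : ∀ t, 0 ≤ t → HasDerivAt u (c t * u t) t)
    (hcK : ∀ t, 0 ≤ t → c t ≤ K) (hnn : ∀ t, 0 ≤ t → 0 ≤ u t) {t : ℝ} (ht : 0 ≤ t) :
    u t ≤ u 0 * exp (K * t) := by
  have h := le_gronwallBound_of_liminf_deriv_right_le (ε := 0) (K := K) (b := t)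
    (fun x hx => (hu x hx.1).continuousAt.continuousWithinAt)
    (fun x hx _ hr => (hu x hx.1).hasDerivWithinAt.liminf_right_slope_le hr) le_rfl
    (fun x hx => by
      rw [add_zero]
      exact mul_le_mul_of_nonneg_right (hcK x hx.1) (hnn x hx.1))
    t ⟨ht, le_rfl⟩
  rwa [sub_zero, gronwallBound_ε0] at h

end LinearODE

theorem three_mul_sq_le_sq_add_mul_add_sq {R x y : ℝ} (hR : 0 ≤ R) (hx : R ≤ x) (hy : R ≤ y) :
    3 * R ^ 2 ≤ x ^ 2 + x * y + y ^ 2 := by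
  nlinarith [mul_le_mul hx hy hR (hR.trans hx)]

/-- Contraction estimate: two solutions of the forced radial equation
`ṙ = λr − r³ + a(t)` with the same forcing, confined to radii `≥ R` with
`3R² > λ`, converge together exponentially:
`0 ≤ r₁(t) − r₂(t) ≤ (r₁(0) − r₂(0))·e^{(λ−3R²)t}`, hence the difference
tends to `0`. -/
theorem forced_radial_contraction (lam R : ℝ) (hR : 0 < R) (hRlam : lam < 3 * R ^ 2)
    (a r₁ r₂ : ℝ → ℝ)
    (hr₁ : ∀ t, 0 ≤ t → HasDerivAt r₁ (lam * r₁ t - (r₁ t) ^ 3 + a t) t)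
    (hr₂ : ∀ t, 0 ≤ t → HasDerivAt r₂ (lam * r₂ t - (r₂ t) ^ 3 + a t) t)
    (hge₁ : ∀ t, 0 ≤ t → R ≤ r₁ t) (hge₂ : ∀ t, 0 ≤ t → R ≤ r₂ t)
    (h0 : r₂ 0 ≤ r₁ 0) :
    (∀ t, 0 ≤ t → 0 ≤ r₁ t - r₂ t ∧
        r₁ t - r₂ t ≤ (r₁ 0 - r₂ 0) * Real.exp ((lam - 3 * R ^ 2) * t)) ∧
      Filter.Tendsto (fun t => r₁ t - r₂ t) Filter.atTop (nhds 0) := by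
  set c : ℝ → ℝ := fun t => lam - (r₁ t ^ 2 + r₁ t * r₂ t + r₂ t ^ 2)
  have hu : ∀ t, 0 ≤ t → HasDerivAt (fun t => r₁ t - r₂ t) (c t * (r₁ t - r₂ t)) t :=
    fun t ht => ((hr₁ t ht).sub (hr₂ t ht)).congr_deriv (by ring)
  have hc : ContinuousOn c (Ici 0) := by
    have h₁ : ContinuousOn r₁ (Ici 0) := fun t ht => (hr₁ t ht).continuousAt.continuousWithinAt
    have h₂ : ContinuousOn r₂ (Ici 0) := fun t ht => (hr₂ t ht).continuousAt.continuousWithinAt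
    fun_prop
  have hcK : ∀ t, 0 ≤ t → c t ≤ lam - 3 * R ^ 2 := fun t ht => by
    linarith [three_mul_sq_le_sq_add_mul_add_sq hR.le (hge₁ t ht) (hge₂ t ht)]
  have hnn := fun t ht => nonneg_of_hasDerivAt_mul_self hu hc (sub_nonneg.2 h0) (t := t) ht
  have hle := fun t ht => le_mul_exp_of_hasDerivAt_mul_self hu hcK hnn (t := t) ht
  have hexp : Tendsto (fun t => (r₁ 0 - r₂ 0) * exp ((lam - 3 * R ^ 2) * t)) atTop (nhds 0) := by
    simpa using (tendsto_exp_atBot.comp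
      (tendsto_id.const_mul_atTop_of_neg (sub_neg.2 hRlam))).const_mul (r₁ 0 - r₂ 0)
  exact ⟨fun t ht => ⟨hnn t ht, hle t ht⟩, squeeze_zero' (eventually_ge_atTop 0 |>.mono hnn)
    (eventually_ge_atTop 0 |>.mono hle) hexp⟩
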